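/- Let X be a countable subshift over a finite alphabet A and let c ∈ X be at level 1. If some pattern appears in c at exactly one position, then there exist a periodic configuration y ∈ A^(ℤ×ℤ) and a finite set E ⊆ ℤ×ℤ such that c(u) = y(u) for every u ∉ E. -/

import Mathlib

namespace CountableSubshift

/-- A configuration over alphabet `A` on the plane `ℤ × ℤ`. -/
abbrev Config (A : Type*) := ℤ × ℤ → A

variable {A : Type*}

/-- The shift by a vector `v`. -/
def shift (v : ℤ × ℤ) (x : Config A) : Config A := fun u => x (u + v)

/-- The shift-orbit of a configuration. -/
def orbit (x : Config A) : Set (Config A) := Set.range fun v => shift v x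

variable [TopologicalSpace A]

/-- `Preceq x y` iff `x` belongs to the closure of the shift-orbit of `y`. -/
def Preceq (x y : Config A) : Prop := x ∈ closure (orbit y)

/-- Strict version of `Preceq`. -/
def Prec (x y : Config A) : Prop := Preceq x y ∧ ¬ Preceq y x

/-- `x ≈ y` : mutual `Preceq`. -/
def OrbEquiv (x y : Config A) : Prop := Preceq x y ∧ Preceq y x

/-- A subshift: nonempty, closed and shift-invariant set of configurations. -/
def IsSubshift (X : Set (Config A)) : Prop :=
  X.Nonempty ∧ IsClosed X ∧ ∀ v : ℤ × ℤ, shift v '' X = X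

/-- A configuration is periodic if it has two linearly independent vectors of periodicity. -/
def Periodic (x : Config A) : Prop :=
  ∃ v w : ℤ × ℤ, shift v x = x ∧ shift w x = x ∧ LinearIndependent ℤ ![v, w]

/-- `x` is at level 0 in `X`: it is `Preceq`-minimal in `X`. -/
def Level0 (X : Set (Config A)) (x : Config A) : Prop :=
  x ∈ X ∧ ∀ y ∈ X, Preceq y x → Preceq x y

/-- `x` is at level 1 in `X`. -/
def Level1 (X : Set (Config A)) (x : Config A) : Prop :=
  x ∈ X ∧ ¬ Level0 X x ∧ ∀ y ∈ X, Prec y x → Level0 X y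

/-- `x` is at level 2 in `X`. -/
def Level2 (X : Set (Config A)) (x : Config A) : Prop :=
  x ∈ X ∧ ¬ Level0 X x ∧ ¬ Level1 X x ∧ ∀ y ∈ X, Prec y x → Level0 X y ∨ Level1 X y

/-- The pattern `p` with (finite) domain `D` appears in `x` at position `u`. -/
def AppearsAt (D : Finset (ℤ × ℤ)) (p : ℤ × ℤ → A) (x : Config A) (u : ℤ × ℤ) : Prop :=
  ∀ d ∈ D, x (u + d) = p d

/-- A subshift of finite type: the nonempty set of configurations avoiding a
finite family of forbidden patterns. -/
def IsSFT (X : Set (Config A)) : Prop :=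
  X.Nonempty ∧ ∃ (n : ℕ) (D : Fin n → Finset (ℤ × ℤ)) (p : Fin n → ℤ × ℤ → A),
    X = {x : Config A | ∀ (i : Fin n) (u : ℤ × ℤ), ¬ AppearsAt (D i) (p i) x u}

/-- Every pattern appearing in `c` appears at infinitely many positions. -/
def AllPatternsInfinite (c : Config A) : Prop :=
  ∀ (D : Finset (ℤ × ℤ)) (u : ℤ × ℤ),
    {u' : ℤ × ℤ | ∀ d ∈ D, c (u' + d) = c (u + d)}.Infinite

/-- The standard dot product on `ℤ × ℤ`. -/
def dot (u w : ℤ × ℤ) : ℤ := u.1 * w.1 + u.2 * w.2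

set_option linter.unusedSectionVars false
set_option linter.unusedTactic false
set_option linter.unnecessarySeqFocus false
set_option linter.unusedVariables false

open Filter Topology


-- basic norm
def bnorm (u : ℤ × ℤ) : ℤ := |u.1| ⊔ |u.2|

lemma bnorm_nonneg (u : ℤ × ℤ) : 0 ≤ bnorm u := le_trans (abs_nonneg _) le_sup_left

lemma bnorm_add_le (u v : ℤ × ℤ) : bnorm (u + v) ≤ bnorm u + bnorm v := by
  simp only [bnorm, Prod.fst_add, Prod.snd_add, sup_le_iff]
  constructor
  · exact le_trans (abs_add_le _ _) (add_le_add le_sup_left le_sup_left)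
  · exact le_trans (abs_add_le _ _) (add_le_add le_sup_right le_sup_right)

lemma bnorm_zero : bnorm (0 : ℤ × ℤ) = 0 := by simp [bnorm]

lemma bnorm_neg (u : ℤ × ℤ) : bnorm (-u) = bnorm u := by
  simp [bnorm, abs_neg]

lemma bnorm_sub_le (u v w : ℤ × ℤ) : bnorm (u - w) ≤ bnorm (u - v) + bnorm (v - w) := by
  have : u - w = (u - v) + (v - w) := by ring
  rw [this]; exact bnorm_add_le _ _

-- shift basics
@[simp] lemma shift_apply (v : ℤ × ℤ) (x : Config A) (u : ℤ × ℤ) : shift v x u = x (u + v) := rfl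

lemma shift_shift (v w : ℤ × ℤ) (x : Config A) : shift v (shift w x) = shift (v + w) x := by
  funext u; simp [shift, add_assoc]

@[simp] lemma shift_zero (x : Config A) : shift 0 x = x := by funext u; simp [shift]

lemma continuous_shift (v : ℤ × ℤ) : Continuous (shift v : Config A → Config A) :=
  continuous_pi fun u => continuous_apply (u + v)

lemma mem_orbit_self (x : Config A) : x ∈ orbit x := ⟨0, shift_zero x⟩

lemma shift_mem_orbit (v : ℤ × ℤ) (x : Config A) : shift v x ∈ orbit x := ⟨v, rfl⟩

lemma orbit_shift (v : ℤ × ℤ) (x : Config A) : orbit (shift v x) = orbit x := by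
  ext z; constructor
  · rintro ⟨w, rfl⟩; exact ⟨w + v, (shift_shift w v x).symm⟩
  · rintro ⟨w, rfl⟩
    exact ⟨w - v, by show shift (w-v) (shift v x) = _; rw [shift_shift, sub_add_cancel]⟩

-- finset balls
noncomputable def ballF (s : ℤ) : Finset (ℤ × ℤ) := Finset.Icc (-s, -s) (s, s)

lemma mem_ballF {s : ℤ} {u : ℤ × ℤ} : u ∈ ballF s ↔ bnorm u ≤ s := by
  simp only [ballF, Finset.mem_Icc, bnorm, sup_le_iff, abs_le, Prod.le_def]
  tauto

def agreeOn (x y : Config A) (F : Finset (ℤ × ℤ)) : Prop := ∀ u ∈ F, x u = y u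

variable [DiscreteTopology A]

lemma isOpen_agree (x : Config A) (F : Finset (ℤ × ℤ)) :
    IsOpen {y : Config A | agreeOn y x F} := by
  have : {y : Config A | agreeOn y x F} = ⋂ u ∈ F, (fun y : Config A => y u) ⁻¹' {x u} := by
    ext y; simp [agreeOn]
  rw [this]
  exact isOpen_biInter_finset fun u _ => (continuous_apply u).isOpen_preimage _ (isOpen_discrete _)

lemma finset_subset_ballF (F : Finset (ℤ × ℤ)) : ∃ s : ℤ, 0 ≤ s ∧ ∀ u ∈ F, u ∈ ballF s := by
  classical
  obtain ⟨s0, hs0⟩ := Finset.exists_le (F.image bnorm)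
  refine ⟨s0 ⊔ 0, le_sup_right, fun u hu => ?_⟩
  rw [mem_ballF]
  exact le_trans (hs0 _ (Finset.mem_image_of_mem _ hu)) le_sup_left

/-- Characterization of membership in closure of a set via finite windows. -/
lemma mem_closure_iff_agree {S : Set (Config A)} {x : Config A} :
    x ∈ closure S ↔ ∀ F : Finset (ℤ × ℤ), ∃ y ∈ S, agreeOn y x F := by
  constructor
  · intro hx F
    have hop : IsOpen {y : Config A | agreeOn y x F} := isOpen_agree x F
    have hxmem : x ∈ {y : Config A | agreeOn y x F} := fun u _ => rfl
    obtain ⟨y, hy⟩ := mem_closure_iff.mp hx _ hop hxmem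
    exact ⟨y, hy.2, hy.1⟩
  · intro h
    rw [mem_closure_iff]
    intro U hU hxU
    obtain ⟨I, w, hw, hsub⟩ := isOpen_pi_iff.mp hU x hxU
    obtain ⟨y, hyS, hagree⟩ := h I
    refine ⟨y, hsub ?_, hyS⟩
    intro a ha
    rw [hagree a ha]
    exact (hw a ha).2

lemma preceq_iff {x y : Config A} :
    Preceq x y ↔ ∀ F : Finset (ℤ × ℤ), ∃ v : ℤ × ℤ, agreeOn (shift v y) x F := by
  rw [Preceq, mem_closure_iff_agree]
  constructor
  · intro h F; obtain ⟨z, ⟨v, rfl⟩, hz⟩ := h F; exact ⟨v, hz⟩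
  · intro h F; obtain ⟨v, hv⟩ := h F; exact ⟨shift v y, shift_mem_orbit v y, hv⟩

lemma preceq_of_agree_balls {x y : Config A}
    (h : ∀ s : ℤ, ∃ v : ℤ × ℤ, agreeOn (shift v y) x (ballF s)) : Preceq x y := by
  rw [preceq_iff]
  intro F
  obtain ⟨s, _, hF⟩ := finset_subset_ballF F
  obtain ⟨v, hv⟩ := h s
  exact ⟨v, fun u hu => hv u (hF u hu)⟩

lemma shift_mem_closure_orbit {x w : Config A} (hw : w ∈ closure (orbit x)) (v : ℤ × ℤ) :
    shift v w ∈ closure (orbit x) := by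
  have hc : Continuous (shift v : Config A → Config A) := continuous_shift v
  have : shift v w ∈ closure (shift v '' orbit x) :=
    (hc.continuousWithinAt.mem_closure_image hw)
  refine closure_mono ?_ this
  rintro z ⟨z', ⟨w', rfl⟩, rfl⟩
  rw [shift_shift]; exact shift_mem_orbit _ _

lemma preceq_refl (x : Config A) : Preceq x x := subset_closure (mem_orbit_self x)

lemma closure_orbit_subset {x w : Config A} (hw : w ∈ closure (orbit x)) :
    closure (orbit w) ⊆ closure (orbit x) := by
  have h1 : orbit w ⊆ closure (orbit x) := by
    rintro z ⟨v, rfl⟩; exact shift_mem_closure_orbit hw v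
  calc closure (orbit w) ⊆ closure (closure (orbit x)) := closure_mono h1
    _ = closure (orbit x) := closure_closure

lemma preceq_trans {x y z : Config A} (h1 : Preceq x y) (h2 : Preceq y z) : Preceq x z :=
  closure_orbit_subset h2 h1

/-! ### Periods -/

def periods (z : Config A) : AddSubgroup (ℤ × ℤ) where
  carrier := {v | shift v z = z}
  add_mem' := by
    intro a b ha hb
    have : shift (a + b) z = shift a (shift b z) := (shift_shift a b z).symm
    simp only [Set.mem_setOf_eq] at *
    rw [this, hb, ha]
  zero_mem' := shift_zero z
  neg_mem' := by
    intro a ha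
    simp only [Set.mem_setOf_eq] at *
    have := congrArg (shift (-a)) ha
    rw [shift_shift, neg_add_cancel, shift_zero] at this
    exact this.symm

lemma periods_apply {z : Config A} {v : ℤ × ℤ} (hv : v ∈ periods z) (u : ℤ × ℤ) :
    z (u + v) = z u := by
  have h : shift v z = z := hv
  calc z (u + v) = shift v z u := rfl
    _ = z u := by rw [h]

lemma periods_shift {z : Config A} {v w : ℤ × ℤ} (hv : v ∈ periods z) :
    v ∈ periods (shift w z) := by
  show shift v (shift w z) = shift w z
  rw [shift_shift, add_comm, ← shift_shift]
  show shift w (shift v z) = _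
  rw [show shift v z = z from hv]

/-- Box separation: two distinct configurations with common periods `(n,0)`, `(0,n)`
differ inside every `n × n` box. -/
lemma box_sep {z z' : Config A} {n : ℤ} (hn : 0 < n)
    (h1 : (n, 0) ∈ periods z) (h2 : (0, n) ∈ periods z)
    (h1' : (n, 0) ∈ periods z') (h2' : (0, n) ∈ periods z')
    (hne : z ≠ z') (a : ℤ × ℤ) :
    ∃ t : ℤ × ℤ, a.1 ≤ t.1 ∧ t.1 < a.1 + n ∧ a.2 ≤ t.2 ∧ t.2 < a.2 + n ∧ z t ≠ z' t := by
  have hex : ∃ t₀, z t₀ ≠ z' t₀ := by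
    by_contra h
    push_neg at h
    exact hne (funext h)
  obtain ⟨t₀, ht₀⟩ := hex
  set t : ℤ × ℤ := (a.1 + (t₀.1 - a.1) % n, a.2 + (t₀.2 - a.2) % n) with ht
  have hw : t = t₀ + ((-(((t₀.1 - a.1) / n))) • ((n:ℤ), (0:ℤ)) + (-(((t₀.2 - a.2) / n))) • ((0:ℤ), (n:ℤ))) := by
    have e1 : (t₀.1 - a.1) % n = (t₀.1 - a.1) - n * ((t₀.1 - a.1) / n) := Int.emod_def _ _
    have e2 : (t₀.2 - a.2) % n = (t₀.2 - a.2) - n * ((t₀.2 - a.2) / n) := Int.emod_def _ _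
    rw [ht]
    ext <;> simp [e1, e2] <;> ring
  have hmemz : ((-(((t₀.1 - a.1) / n))) • ((n:ℤ), (0:ℤ)) + (-(((t₀.2 - a.2) / n))) • ((0:ℤ), (n:ℤ))) ∈ periods z :=
    AddSubgroup.add_mem _ (AddSubgroup.zsmul_mem _ h1 _) (AddSubgroup.zsmul_mem _ h2 _)
  have hmemz' : ((-(((t₀.1 - a.1) / n))) • ((n:ℤ), (0:ℤ)) + (-(((t₀.2 - a.2) / n))) • ((0:ℤ), (n:ℤ))) ∈ periods z' :=
    AddSubgroup.add_mem _ (AddSubgroup.zsmul_mem _ h1' _) (AddSubgroup.zsmul_mem _ h2' _)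
  have hzt : z t = z t₀ := by rw [hw]; exact periods_apply hmemz t₀
  have hzt' : z' t = z' t₀ := by rw [hw]; exact periods_apply hmemz' t₀
  refine ⟨t, ?_, ?_, ?_, ?_, ?_⟩
  · simp only [ht]; linarith [Int.emod_nonneg (t₀.1 - a.1) (ne_of_gt hn)]
  · simp only [ht]; linarith [Int.emod_lt_of_pos (t₀.1 - a.1) hn]
  · simp only [ht]; linarith [Int.emod_nonneg (t₀.2 - a.2) (ne_of_gt hn)]
  · simp only [ht]; linarith [Int.emod_lt_of_pos (t₀.2 - a.2) hn]
  · rw [hzt, hzt']; exact ht₀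

/-! ### Baire: isolated point in countable closed set -/

variable [Fintype A] [DiscreteTopology A]

lemma exists_isolated {K : Set (Config A)} (hK : IsClosed K) (hne : K.Nonempty)
    (hcnt : K.Countable) :
    ∃ z ∈ K, ∃ F : Finset (ℤ × ℤ), ∀ w ∈ K, agreeOn w z F → w = z := by
  have hKc : IsCompact K := hK.isCompact
  haveI : CompactSpace K := isCompact_iff_compactSpace.mp hKc
  haveI : Countable K := hcnt.to_subtype
  haveI : Nonempty K := hne.to_subtype
  haveI : LocallyCompactSpace K := by infer_instance
  haveI : BaireSpace K := by infer_instance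
  obtain ⟨z, hz⟩ := nonempty_interior_of_iUnion_of_closed
    (f := fun z : K => ({z} : Set K)) (fun z => isClosed_singleton)
    (by ext w; simp)
  have hzopen : IsOpen ({z} : Set K) := by
    have h1 : interior ({z} : Set K) = {z} :=
      Set.eq_of_subset_of_subset interior_subset
        (by obtain ⟨w, hw⟩ := hz
            have hwz : w ∈ ({z} : Set K) := interior_subset hw
            simp only [Set.mem_singleton_iff] at hwz
            subst hwz
            intro a ha
            simp only [Set.mem_singleton_iff] at ha
            subst ha
            exact hw)
    rw [← h1]; exact isOpen_interior
  obtain ⟨U, hU, hUval⟩ := isOpen_induced_iff.mp hzopen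
  have hzU : (z : Config A) ∈ U := by
    have : z ∈ (Subtype.val ⁻¹' U : Set K) := by rw [hUval]; rfl
    exact this
  obtain ⟨I, w, hw, hsub⟩ := isOpen_pi_iff.mp hU (z : Config A) hzU
  refine ⟨(z : Config A), z.2, I, fun ξ hξ hag => ?_⟩
  have hξU : ξ ∈ U := by
    apply hsub
    intro a ha
    rw [hag a ha]
    exact (hw a ha).2
  have : (⟨ξ, hξ⟩ : K) ∈ (Subtype.val ⁻¹' U : Set K) := hξU
  rw [hUval] at this
  exact congrArg Subtype.val this

/-- A minimal orbit closure that is countable is a finite orbit. -/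
lemma minimal_orbit_finite {x : Config A}
    (hcnt : (closure (orbit x)).Countable)
    (hmin : ∀ w ∈ closure (orbit x), Preceq x w) :
    (closure (orbit x)).Finite ∧ closure (orbit x) = orbit x := by
  set M := closure (orbit x) with hM
  have hMclosed : IsClosed M := isClosed_closure
  have hMne : M.Nonempty := ⟨x, subset_closure (mem_orbit_self x)⟩
  obtain ⟨z, hzM, F, hFiso⟩ := exists_isolated hMclosed hMne hcnt
  -- every w in M equals some shift of z
  have hall : ∀ w ∈ M, ∃ v, w = shift v z := by
    intro w hw
    have hxw : Preceq x w := hmin w hw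
    have hMsub : M ⊆ closure (orbit w) := by
      rw [hM]; exact closure_orbit_subset hxw
    have hz' : Preceq z w := hMsub hzM
    obtain ⟨v, hv⟩ := preceq_iff.mp hz' F
    have hvM : shift v w ∈ M := shift_mem_closure_orbit hw v
    have : shift v w = z := hFiso _ hvM hv
    refine ⟨-v, ?_⟩
    rw [← this, shift_shift, neg_add_cancel, shift_zero]
  have hMorb : M = orbit z := by
    apply Set.eq_of_subset_of_subset
    · intro w hw; obtain ⟨v, rfl⟩ := hall w hw; exact shift_mem_orbit v z
    · intro w ⟨v, hv⟩
      rw [← hv]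
      exact shift_mem_closure_orbit hzM v
  have horbx : orbit z = orbit x := by
    obtain ⟨v, hv⟩ := hall x (subset_closure (mem_orbit_self x))
    rw [hv, orbit_shift]
  -- discreteness of M
  haveI : DiscreteTopology M := by
    apply discreteTopology_iff_isOpen_singleton.mpr
    intro a
    obtain ⟨v, hv⟩ := hall a.val a.2
    refine isOpen_induced_iff.mpr ⟨(fun ξ => shift (-v) ξ) ⁻¹' {y | agreeOn y z F}, ?_, ?_⟩
    · exact (isOpen_agree z F).preimage (continuous_shift (-v))
    · ext ξ
      simp only [Set.mem_preimage, Set.mem_setOf_eq, Set.mem_singleton_iff]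
      constructor
      · intro hag
        have hmem : shift (-v) ξ.val ∈ M := shift_mem_closure_orbit ξ.2 (-v)
        have heq : shift (-v) ξ.val = z := hFiso _ hmem hag
        apply Subtype.ext
        have := congrArg (shift v) heq
        rw [shift_shift, add_neg_cancel, shift_zero] at this
        rw [this, hv]
      · intro h
        have : ξ.val = shift v z := by
          have := congrArg Subtype.val h
          rw [this, hv]
        rw [this, shift_shift, neg_add_cancel, shift_zero]
        intro u _; rfl
  exact ⟨hMclosed.isCompact.finite (isDiscrete_iff_discreteTopology.mpr inferInstance), by rw [hMorb, horbx]⟩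



/-! ### Grid paths -/

/-- A path in `S` from `p` to `q` with sup-norm steps of size ≤ 1. -/
def SupPath (S : Set (ℤ × ℤ)) (p q : ℤ × ℤ) : Prop :=
  ∃ (L : ℕ) (f : ℕ → ℤ × ℤ), f 0 = p ∧ f L = q ∧
    (∀ i < L, bnorm (f (i + 1) - f i) ≤ 1) ∧ (∀ i ≤ L, f i ∈ S)

lemma SupPath.refl {S : Set (ℤ × ℤ)} {p : ℤ × ℤ} (hp : p ∈ S) : SupPath S p p :=
  ⟨0, fun _ => p, rfl, rfl, fun i hi => absurd hi (Nat.not_lt_zero i),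
    fun i hi => by simpa using hp⟩

lemma SupPath.trans {S : Set (ℤ × ℤ)} {p q r : ℤ × ℤ}
    (h1 : SupPath S p q) (h2 : SupPath S q r) : SupPath S p r := by
  obtain ⟨L1, f, hf0, hfL, hfstep, hfmem⟩ := h1
  obtain ⟨L2, g, hg0, hgL, hgstep, hgmem⟩ := h2
  refine ⟨L1 + L2, fun i => if i ≤ L1 then f i else g (i - L1), by simp [hf0], ?_, ?_, ?_⟩
  · by_cases h : L2 = 0
    · simp [h, hfL, ← hg0 ▸ (by rw [h] at hgL; exact hgL : g 0 = r)]
    · have : ¬ (L1 + L2 ≤ L1) := by omega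
      simp [this, hgL]
  · intro i hi
    by_cases h : i + 1 ≤ L1
    · have : i ≤ L1 := by omega
      simp only [h, this, if_true]
      exact hfstep i (by omega)
    · by_cases h' : i ≤ L1
      · have hiL1 : i = L1 := by omega
        simp only [h, h', if_true, if_false]
        subst hiL1
        have : i + 1 - i = 1 := by omega
        rw [this]
        by_cases h2 : 1 ≤ L2
        · have := hgstep 0 (by omega)
          rw [hg0, ← hfL] at this
          simpa using this
        · omega
      · simp only [h, h', if_false]
        have e : i + 1 - L1 = (i - L1) + 1 := by omega
        rw [e]
        exact hgstep (i - L1) (by omega)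
  · intro i hi
    by_cases h : i ≤ L1
    · simp only [h, if_true]; exact hfmem i h
    · simp only [h, if_false]; exact hgmem (i - L1) (by omega)

lemma SupPath.symm {S : Set (ℤ × ℤ)} {p q : ℤ × ℤ} (h : SupPath S p q) : SupPath S q p := by
  obtain ⟨L, f, hf0, hfL, hstep, hmem⟩ := h
  refine ⟨L, fun i => f (L - i), by simp [hfL], by simp [hf0], ?_, ?_⟩
  · intro i hi
    have e : L - i = (L - (i + 1)) + 1 := by omega
    have := hstep (L - (i + 1)) (by omega)
    rw [← e] at this
    have e2 : f (L - (i+1)) - f (L - i) = -(f (L - i) - f (L - (i+1))) := by ring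
    rw [e2, bnorm_neg]
    exact this
  · intro i hi; exact hmem (L - i) (by omega)

/-- interpolation of one coordinate -/
def mov (a b : ℤ) (i : ℕ) : ℤ := if a ≤ b then min (a + i) b else max (a - i) b

lemma mov_zero (a b : ℤ) : mov a b 0 = a := by
  unfold mov; split <;> omega
lemma mov_last (a b : ℤ) (i : ℕ) (h : |b - a| ≤ (i : ℤ)) : mov a b i = b := by
  rcases abs_cases (b - a) with ⟨h1, h2⟩ | ⟨h1, h2⟩ <;> unfold mov <;> split <;> omega
lemma mov_step (a b : ℤ) (i : ℕ) : |mov a b (i + 1) - mov a b i| ≤ 1 := by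
  unfold mov; split <;> (rw [abs_le]; push_cast; omega)
lemma mov_mem (a b : ℤ) (i : ℕ) : min a b ≤ mov a b i ∧ mov a b i ≤ max a b := by
  unfold mov; split <;> (push_cast; omega)

/-- straight (box) path -/
lemma supPath_box {S : Set (ℤ × ℤ)} {p q : ℤ × ℤ}
    (hbox : ∀ t : ℤ × ℤ, min p.1 q.1 ≤ t.1 → t.1 ≤ max p.1 q.1 →
      min p.2 q.2 ≤ t.2 → t.2 ≤ max p.2 q.2 → t ∈ S) :
    SupPath S p q := by
  set L : ℕ := (|q.1 - p.1| ⊔ |q.2 - p.2|).toNat with hL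
  refine ⟨L, fun i => (mov p.1 q.1 i, mov p.2 q.2 i), ?_, ?_, ?_, ?_⟩
  · simp [mov_zero]
  · have h1 : |q.1 - p.1| ≤ (L : ℤ) := by rw [hL]; rw [Int.toNat_of_nonneg (by positivity)]; exact le_sup_left
    have h2 : |q.2 - p.2| ≤ (L : ℤ) := by rw [hL]; rw [Int.toNat_of_nonneg (by positivity)]; exact le_sup_right
    simp [mov_last _ _ _ h1, mov_last _ _ _ h2]
  · intro i _
    simp only [bnorm, Prod.fst_sub, Prod.snd_sub]
    exact sup_le_iff.mpr ⟨mov_step _ _ _, mov_step _ _ _⟩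
  · intro i _
    exact hbox _ (mov_mem p.1 q.1 i).1 (mov_mem p.1 q.1 i).2 (mov_mem p.2 q.2 i).1
      (mov_mem p.2 q.2 i).2

/-- The outside of a ball is `SupPath`-connected. -/
lemma supPath_outside {N : ℤ} (hN : 0 < N) {p q : ℤ × ℤ}
    (hp : N ≤ bnorm p) (hq : N ≤ bnorm q) :
    SupPath {u : ℤ × ℤ | N ≤ bnorm u} p q := by
  set S : Set (ℤ × ℤ) := {u : ℤ × ℤ | N ≤ bnorm u} with hS
  have corner : ∀ r : ℤ × ℤ, N ≤ bnorm r → SupPath S r (N, N) := by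
    intro r hr
    have h4 : N ≤ |r.1| ∨ N ≤ |r.2| := by
      rcases le_sup_iff.mp hr with h | h
      · exact Or.inl h
      · exact Or.inr h
    have seg_ge1 : ∀ (a b : ℤ × ℤ), N ≤ a.1 → N ≤ b.1 → SupPath S a b := by
      intro a b ha hb
      apply supPath_box
      intro t ht1 _ _ _
      show N ≤ bnorm t
      have : N ≤ t.1 := le_trans (le_min ha hb) ht1
      exact le_trans (le_trans this (le_abs_self _)) le_sup_left
    have seg_le1 : ∀ (a b : ℤ × ℤ), a.1 ≤ -N → b.1 ≤ -N → SupPath S a b := by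
      intro a b ha hb
      apply supPath_box
      intro t _ ht1 _ _
      show N ≤ bnorm t
      have : t.1 ≤ -N := le_trans ht1 (max_le ha hb)
      have : N ≤ |t.1| := by rcases abs_cases t.1 with ⟨h1, h2⟩ | ⟨h1, h2⟩ <;> omega
      exact le_trans this le_sup_left
    have seg_ge2 : ∀ (a b : ℤ × ℤ), N ≤ a.2 → N ≤ b.2 → SupPath S a b := by
      intro a b ha hb
      apply supPath_box
      intro t _ _ ht2 _
      show N ≤ bnorm t
      have : N ≤ t.2 := le_trans (le_min ha hb) ht2
      exact le_trans (le_trans this (le_abs_self _)) le_sup_right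
    have seg_le2 : ∀ (a b : ℤ × ℤ), a.2 ≤ -N → b.2 ≤ -N → SupPath S a b := by
      intro a b ha hb
      apply supPath_box
      intro t _ _ _ ht2
      show N ≤ bnorm t
      have h' : t.2 ≤ -N := le_trans ht2 (max_le ha hb)
      have : N ≤ |t.2| := by rcases abs_cases t.2 with ⟨h1, h2⟩ | ⟨h1, h2⟩ <;> omega
      exact le_trans this le_sup_right
    rcases h4 with h | h
    · rcases abs_cases r.1 with ⟨he, _⟩ | ⟨he, _⟩
      · exact seg_ge1 r (N, N) (by omega) (by norm_num)
      · exact (seg_le1 r (-N, N) (by omega) (by norm_num)).trans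
          (seg_ge2 (-N, N) (N, N) (by norm_num) (by norm_num))
    · rcases abs_cases r.2 with ⟨he, _⟩ | ⟨he, _⟩
      · exact seg_ge2 r (N, N) (by omega) (by norm_num)
      · exact (seg_le2 r (N, -N) (by omega) (by norm_num)).trans
          (seg_ge1 (N, -N) (N, N) (by norm_num) (by norm_num))
  exact (corner p hp).trans (corner q hq).symm

/-! ### Common periods of a finite orbit -/

lemma exists_pos_period_fst {x : Config A} (hfin : (orbit x).Finite) :
    ∃ d : ℤ, 0 < d ∧ (d, 0) ∈ periods x := by
  haveI := hfin.to_subtype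
  obtain ⟨k1, k2, hne, heq⟩ := Finite.exists_ne_map_eq_of_infinite
    (fun k : ℤ => (⟨shift (k, 0) x, shift_mem_orbit _ _⟩ : orbit x))
  have heq' : shift (k1, 0) x = shift (k2, 0) x := congrArg Subtype.val heq
  have hmem : (k1 - k2, 0) ∈ periods x := by
    show shift (k1 - k2, 0) x = x
    have := congrArg (shift (-k2, 0)) heq'
    rw [shift_shift, shift_shift] at this
    have e1 : (-k2, (0:ℤ)) + (k1, (0:ℤ)) = (k1 - k2, 0) := by ext <;> simp <;> ring
    have e2 : (-k2, (0:ℤ)) + (k2, (0:ℤ)) = 0 := by ext <;> simp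
    rw [e1, e2, shift_zero] at this
    exact this
  rcases lt_trichotomy (k1 - k2) 0 with h | h | h
  · refine ⟨k2 - k1, by omega, ?_⟩
    have := (periods x).neg_mem hmem
    have e : -((k1 - k2), (0:ℤ)) = (k2 - k1, 0) := by ext <;> simp
    rwa [e] at this
  · exact absurd (by omega : k1 = k2) hne
  · exact ⟨k1 - k2, h, hmem⟩

lemma exists_pos_period_snd {x : Config A} (hfin : (orbit x).Finite) :
    ∃ d : ℤ, 0 < d ∧ (0, d) ∈ periods x := by
  haveI := hfin.to_subtype
  obtain ⟨k1, k2, hne, heq⟩ := Finite.exists_ne_map_eq_of_infinite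
    (fun k : ℤ => (⟨shift (0, k) x, shift_mem_orbit _ _⟩ : orbit x))
  have heq' : shift (0, k1) x = shift (0, k2) x := congrArg Subtype.val heq
  have hmem : (0, k1 - k2) ∈ periods x := by
    show shift (0, k1 - k2) x = x
    have := congrArg (shift (0, -k2)) heq'
    rw [shift_shift, shift_shift] at this
    have e1 : ((0:ℤ), -k2) + ((0:ℤ), k1) = (0, k1 - k2) := by ext <;> simp <;> ring
    have e2 : ((0:ℤ), -k2) + ((0:ℤ), k2) = 0 := by ext <;> simp
    rw [e1, e2, shift_zero] at this
    exact this
  rcases lt_trichotomy (k1 - k2) 0 with h | h | h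
  · refine ⟨k2 - k1, by omega, ?_⟩
    have := (periods x).neg_mem hmem
    have e : -((0:ℤ), (k1 - k2)) = (0, k2 - k1) := by ext <;> simp
    rwa [e] at this
  · exact absurd (by omega : k1 = k2) hne
  · exact ⟨k1 - k2, h, hmem⟩

lemma exists_common_period {x : Config A} (hfin : (orbit x).Finite) :
    ∃ n : ℤ, 0 < n ∧ ∀ z ∈ orbit x, (n, 0) ∈ periods z ∧ (0, n) ∈ periods z := by
  obtain ⟨d1, hd1, h1⟩ := exists_pos_period_fst hfin
  obtain ⟨d2, hd2, h2⟩ := exists_pos_period_snd hfin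
  refine ⟨d1 * d2, mul_pos hd1 hd2, ?_⟩
  have hx1 : (d1 * d2, (0:ℤ)) ∈ periods x := by
    have := (periods x).zsmul_mem h1 d2
    have e : d2 • ((d1:ℤ), (0:ℤ)) = (d1 * d2, 0) := by
      ext <;> simp [mul_comm]
    rwa [e] at this
  have hx2 : ((0:ℤ), d1 * d2) ∈ periods x := by
    have := (periods x).zsmul_mem h2 d1
    have e : d1 • ((0:ℤ), (d2:ℤ)) = (0, d1 * d2) := by
      ext <;> simp [mul_comm]
    rwa [e] at this
  rintro z ⟨v, rfl⟩
  exact ⟨periods_shift hx1, periods_shift hx2⟩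

/-! ### Midpoint lemma -/

lemma mid1 (a b K s : ℤ) (h0 : 0 ≤ s) (hsK : s ≤ K) (hab : |b - a| ≤ K + 1) :
    ∃ m : ℤ, |m - a| ≤ K - s ∧ |m - b| ≤ s + 1 := by
  refine ⟨if a ≤ b then a + min (b - a) (K - s) else a - min (a - b) (K - s), ?_, ?_⟩ <;>
    rcases abs_cases (b - a) with ⟨h1, h2⟩ | ⟨h1, h2⟩ <;> split <;> rw [abs_le] <;> omega

lemma midpoint_pt (w q : ℤ × ℤ) (K s : ℤ) (h0 : 0 ≤ s) (hsK : s ≤ K)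
    (hd : bnorm (q - w) ≤ K + 1) :
    ∃ m : ℤ × ℤ, bnorm (m - w) ≤ K - s ∧ bnorm (m - q) ≤ s + 1 := by
  have hd1 : |q.1 - w.1| ≤ K + 1 := le_trans le_sup_left hd
  have hd2 : |q.2 - w.2| ≤ K + 1 := le_trans le_sup_right hd
  obtain ⟨m1, hm1, hm1'⟩ := mid1 w.1 q.1 K s h0 hsK hd1
  obtain ⟨m2, hm2, hm2'⟩ := mid1 w.2 q.2 K s h0 hsK hd2
  exact ⟨(m1, m2), sup_le hm1 hm2, sup_le hm1' hm2'⟩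


/-! ### Patterns -/

lemma shift_appears {D : Finset (ℤ × ℤ)} {p : ℤ × ℤ → A} (v u : ℤ × ℤ) (x : Config A) :
    AppearsAt D p (shift v x) u ↔ AppearsAt D p x (u + v) := by
  unfold AppearsAt
  constructor <;> intro h d hd
  · have := h d hd
    rw [shift_apply, add_right_comm] at this
    exact this
  · rw [shift_apply, add_right_comm]
    exact h d hd

lemma occurrence_rigid {D : Finset (ℤ × ℤ)} {p : ℤ × ℤ → A} {c : Config A} {u₀ : ℤ × ℤ}
    (hocc : AppearsAt D p c u₀) (huniq : ∀ u, AppearsAt D p c u → u = u₀)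
    {x : Config A} (hx : x ∈ closure (orbit c)) {w : ℤ × ℤ} (hw : AppearsAt D p x w) :
    x = shift (u₀ - w) c := by
  have key : ∀ F : Finset (ℤ × ℤ), agreeOn (shift (u₀ - w) c) x F := by
    intro F
    obtain ⟨v, hv⟩ := preceq_iff.mp hx (F ∪ D.image (fun d => w + d))
    have happ : AppearsAt D p (shift v c) w := by
      intro d hd
      rw [hv _ (Finset.mem_union_right _ (Finset.mem_image_of_mem _ hd))]
      exact hw d hd
    have happ2 : AppearsAt D p c (w + v) := (shift_appears v w c).mp happ
    have hveq : v = u₀ - w := by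
      have h := huniq _ happ2
      rw [← h]; ring
    rw [← hveq]
    intro u hu
    exact hv u (Finset.mem_union_left _ hu)
  funext u
  exact (key {u} u (Finset.mem_singleton_self u)).symm


lemma linIndep_diag {n : ℤ} (hn : 0 < n) :
    LinearIndependent ℤ ![((n:ℤ), (0:ℤ)), ((0:ℤ), (n:ℤ))] := by
  rw [LinearIndependent.pair_iff]
  intro s t hst
  have h1 : s * n + t * 0 = 0 := congrArg Prod.fst hst
  have h2 : s * 0 + t * n = 0 := congrArg Prod.snd hst
  constructor
  · rcases mul_eq_zero.mp (by omega : s * n = 0) with h | h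
    · exact h
    · omega
  · rcases mul_eq_zero.mp (by omega : t * n = 0) with h | h
    · exact h
    · omega

theorem stmt6 {A : Type*} [Fintype A] [Nonempty A] [TopologicalSpace A] [DiscreteTopology A]
    (X : Set (Config A)) (hX : IsSubshift X) (hcount : X.Countable)
    (c : Config A) (hc : Level1 X c)
    (hpat : ∃ (D : Finset (ℤ × ℤ)) (p : ℤ × ℤ → A) (u₀ : ℤ × ℤ),
      AppearsAt D p c u₀ ∧ ∀ u, AppearsAt D p c u → u = u₀) :
    ∃ y : Config A, Periodic y ∧ ∃ E : Finset (ℤ × ℤ), ∀ u ∉ E, c u = y u := by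
  classical
  obtain ⟨D, p, u₀, hocc, huniq⟩ := hpat
  obtain ⟨hXne, hXcl, hXinv⟩ := hX
  obtain ⟨hcX, hnot0, hlev⟩ := hc
  set Z := closure (orbit c) with hZ
  have horbX : orbit c ⊆ X := by
    rintro _ ⟨v, rfl⟩
    rw [← hXinv v]
    exact ⟨c, hcX, rfl⟩
  have hZX : Z ⊆ X := closure_minimal horbX hXcl
  have hcZ : c ∈ Z := subset_closure (mem_orbit_self c)
  have hZcnt : Z.Countable := hcount.mono hZX
  have hrigid : ∀ x ∈ Z, ∀ w, AppearsAt D p x w → x = shift (u₀ - w) c :=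
    fun x hx w hw => occurrence_rigid hocc huniq hx hw
  have hnc : ∀ x, x ∈ Z → x ∉ orbit c → ¬ Preceq c x := by
    intro x hxZ hxo hcx
    obtain ⟨v, hv⟩ := preceq_iff.mp hcx (D.image (fun d => u₀ + d))
    have happ : AppearsAt D p (shift v x) u₀ := by
      intro d hd
      rw [hv _ (Finset.mem_image_of_mem _ hd)]
      exact hocc d hd
    have happ2 : AppearsAt D p x (u₀ + v) := (shift_appears v u₀ x).mp happ
    have hx2 := hrigid x hxZ _ happ2
    apply hxo
    rw [hx2]
    exact shift_mem_orbit _ _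
  have hlev0 : ∀ x, x ∈ Z → x ∉ orbit c → Level0 X x :=
    fun x hxZ hxo => hlev x (hZX hxZ) ⟨hxZ, hnc x hxZ hxo⟩
  have hYne : ∃ y, y ∈ Z ∧ y ∉ orbit c := by
    by_contra h
    push_neg at h
    apply hnot0
    refine ⟨hcX, fun w _ hwc => ?_⟩
    obtain ⟨v, rfl⟩ := h w hwc
    show c ∈ closure (orbit (shift v c))
    rw [orbit_shift]
    exact hcZ
  obtain ⟨y, hyZ, hyo⟩ := hYne
  have hy0 : Level0 X y := hlev0 y hyZ hyo
  set O := closure (orbit y) with hO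
  have hOZ : O ⊆ Z := closure_orbit_subset hyZ
  have hmin : ∀ w ∈ O, Preceq y w := fun w hw => hy0.2 w (hZX (hOZ hw)) hw
  obtain ⟨hOfin, hOorb⟩ := minimal_orbit_finite (hZcnt.mono hOZ) hmin
  obtain ⟨n, hn, hperiod⟩ := exists_common_period (hOorb ▸ hOfin)
  have hper : ∀ z ∈ O, (n, 0) ∈ periods z ∧ (0, n) ∈ periods z :=
    fun z hz => hperiod z (hOorb ▸ hz)
  have hyO : y ∈ O := subset_closure (mem_orbit_self y)
  set Good : ℤ → ℤ × ℤ → Prop :=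
    fun s u => ∃ z ∈ O, ∀ t : ℤ × ℤ, bnorm (t - u) ≤ s → c t = z t with hGoodDef
  have hmono : ∀ s s' u u', Good s u → s' + bnorm (u' - u) ≤ s → Good s' u' := by
    rintro s s' u u' ⟨z, hzO, hz⟩ hle
    refine ⟨z, hzO, fun t ht => hz t ?_⟩
    calc bnorm (t - u) ≤ bnorm (t - u') + bnorm (u' - u) := bnorm_sub_le _ _ _
      _ ≤ s' + bnorm (u' - u) := add_le_add ht le_rfl
      _ ≤ s := hle
  have hdeep : ∀ s N : ℤ, ∃ b, N ≤ bnorm b ∧ Good s b := by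
    intro s N
    by_contra hcon
    push_neg at hcon
    have hch : ∀ k : ℕ, ∃ v : ℤ × ℤ, agreeOn (shift v c) y (ballF (|s| + k)) :=
      fun k => preceq_iff.mp hyZ _
    choose v hv using hch
    have hgood : ∀ k : ℕ, Good s (v k) := by
      intro k
      refine ⟨shift (-(v k)) y, shift_mem_closure_orbit hyO _, fun t ht => ?_⟩
      have hb : t - v k ∈ ballF (|s| + k) := by
        rw [mem_ballF]
        have h1 : s ≤ |s| := le_abs_self s
        have h2 : (0:ℤ) ≤ k := Int.ofNat_nonneg k
        omega
      have := hv k _ hb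
      rw [shift_apply, sub_add_cancel] at this
      rw [this, shift_apply, sub_eq_add_neg]
    have hbd : ∀ k, ¬ N ≤ bnorm (v k) := fun k h => hcon (v k) h (hgood k)
    have hfin : {u : ℤ × ℤ | ¬ N ≤ bnorm u}.Finite := by
      refine Set.Finite.subset (ballF N).finite_toSet (fun u hu => ?_)
      rw [Finset.mem_coe, mem_ballF]
      simp only [Set.mem_setOf_eq, not_le] at hu
      omega
    haveI := hfin.to_subtype
    obtain ⟨v₀, hv₀⟩ := Finite.exists_infinite_fiber
      (fun k : ℕ => (⟨v k, hbd k⟩ : {u : ℤ × ℤ | ¬ N ≤ bnorm u}))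
    have hinf : ((fun k : ℕ => (⟨v k, hbd k⟩ : {u : ℤ × ℤ | ¬ N ≤ bnorm u})) ⁻¹' {v₀}).Infinite :=
      Set.infinite_coe_iff.mp hv₀
    apply hyo
    refine ⟨(v₀ : ℤ × ℤ), funext fun t => ?_⟩
    obtain ⟨k, hkfib, hklt⟩ := hinf.exists_gt ((bnorm t).toNat)
    have hkt : bnorm t ≤ |s| + k := by
      have h1 := Int.self_le_toNat (bnorm t)
      have h2 : (0:ℤ) ≤ |s| := abs_nonneg s
      have h3 : ((bnorm t).toNat : ℤ) < (k : ℤ) := by exact_mod_cast hklt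
      omega
    have := hv k t (mem_ballF.mpr hkt)
    have hvk : v k = (v₀ : ℤ × ℤ) := congrArg Subtype.val hkfib
    rw [hvk] at this
    exact this
  set Bad := {u : ℤ × ℤ | ¬ Good n u} with hBadDef
  by_cases hBf : Bad.Finite
  · -- Bad finite: c agrees with a periodic configuration off a finite set
    obtain ⟨R0, hR0⟩ := Finset.exists_le (hBf.toFinset.image bnorm)
    set R : ℤ := max R0 0 + 1 with hR
    have hRpos : 0 < R := by omega
    have hBadlt : ∀ u ∈ Bad, bnorm u < R := by
      intro u hu
      have := hR0 (bnorm u) (Finset.mem_image_of_mem _ (hBf.mem_toFinset.mpr hu))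
      omega
    have hGoodS : ∀ u : ℤ × ℤ, R ≤ bnorm u → Good n u := by
      intro u hu
      by_contra h
      have := hBadlt u h
      omega
    have hGoodS' : ∀ u : ℤ × ℤ, ∃ z, z ∈ O ∧
        (R ≤ bnorm u → ∀ t, bnorm (t - u) ≤ n → c t = z t) := by
      intro u
      by_cases h : R ≤ bnorm u
      · obtain ⟨z, hzO, hz⟩ := hGoodS u h
        exact ⟨z, hzO, fun _ => hz⟩
      · exact ⟨y, hyO, fun h' => absurd h' h⟩
    choose zw hzwO hzw using hGoodS'
    have hadj : ∀ u u' : ℤ × ℤ, R ≤ bnorm u → R ≤ bnorm u' → bnorm (u' - u) ≤ 1 →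
        zw u = zw u' := by
      intro u u' hu hu' hstep
      by_contra hne
      obtain ⟨t, ht1, ht2, ht3, ht4, htne⟩ := box_sep hn (hper _ (hzwO u)).1 (hper _ (hzwO u)).2
        (hper _ (hzwO u')).1 (hper _ (hzwO u')).2 hne (max u.1 u'.1 - n, max u.2 u'.2 - n)
      have hd1 : |u'.1 - u.1| ≤ 1 := le_trans le_sup_left hstep
      have hd2 : |u'.2 - u.2| ≤ 1 := le_trans le_sup_right hstep
      rw [abs_le] at hd1 hd2
      dsimp only at ht1 ht2 ht3 ht4
      have hbu : bnorm (t - u) ≤ n := by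
        simp only [bnorm, Prod.fst_sub, Prod.snd_sub, sup_le_iff]
        constructor <;> rw [abs_le] <;> omega
      have hbu' : bnorm (t - u') ≤ n := by
        simp only [bnorm, Prod.fst_sub, Prod.snd_sub, sup_le_iff]
        constructor <;> rw [abs_le] <;> omega
      exact htne ((hzw u hu t hbu).symm.trans (hzw u' hu' t hbu'))
    have hglue : ∀ a b : ℤ × ℤ, SupPath {u : ℤ × ℤ | R ≤ bnorm u} a b → zw a = zw b := by
      rintro a b ⟨L, f, hf0, hfL, hstep, hmem⟩
      have key : ∀ i ≤ L, zw (f 0) = zw (f i) := by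
        intro i
        induction i with
        | zero => intro _; rfl
        | succ j ih =>
          intro hle
          rw [ih (by omega)]
          exact hadj (f j) (f (j+1)) (hmem j (by omega)) (hmem (j+1) hle) (hstep j (by omega))
      rw [← hf0, ← hfL]
      exact key L le_rfl
    have hbase : R ≤ bnorm ((R, 0) : ℤ × ℤ) := by
      simp only [bnorm]
      rw [abs_of_pos hRpos]
      exact le_sup_left
    refine ⟨zw (R, 0), ?_, ballF R, ?_⟩
    · obtain ⟨h1, h2⟩ := hper _ (hzwO (R, 0))
      exact ⟨(n, 0), (0, n), h1, h2, linIndep_diag hn⟩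
    · intro u hu
      have hu' : R ≤ bnorm u := by
        rw [mem_ballF] at hu
        omega
      have hpath := supPath_outside hRpos hu' hbase
      have heq := hglue u (R, 0) hpath
      have hcc := hzw u hu' u (by rw [sub_self]; show bnorm 0 ≤ n; simp [bnorm]; omega)
      rw [hcc, heq]
  · -- Bad infinite: contradiction
    exfalso
    have hBadInf : Bad.Infinite := hBf
    -- Step 1: for every k, find a deep/shallow boundary point with a defect just outside
    have hk : ∀ k : ℕ, ∃ (w q : ℤ × ℤ) (z : Config A), z ∈ O ∧
        (∀ t, bnorm (t - w) ≤ n + k → c t = z t) ∧ bnorm (q - w) = n + k + 1 ∧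
        c q ≠ z q ∧ (k : ℤ) + 1 ≤ bnorm q := by
      intro k
      set N : ℤ := n + 2 * k + 4 with hN
      have hNpos : 0 < N := by omega
      obtain ⟨b, hbN, hbGood⟩ := hdeep (n + k + 1) N
      obtain ⟨a, haBad, haN⟩ : ∃ a, a ∈ Bad ∧ N ≤ bnorm a := by
        obtain ⟨a, ha1, ha2⟩ := (hBadInf.diff (ballF N).finite_toSet).nonempty
        refine ⟨a, ha1, ?_⟩
        have : ¬ bnorm a ≤ N := fun h => ha2 (mem_ballF.mpr h)
        omega
      obtain ⟨L, f, hf0, hfL, hstep, hmem⟩ := supPath_outside hNpos hbN haN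
      have hexQ : ∃ i, ¬ Good (n + k + 1) (f i) := by
        refine ⟨L, ?_⟩
        rw [hfL]
        intro hg
        exact haBad (hmono _ _ _ _ hg (by rw [sub_self, bnorm_zero]; omega))
      set j := Nat.find hexQ with hj
      have hjspec : ¬ Good (n + k + 1) (f j) := Nat.find_spec hexQ
      have hjL : j ≤ L := Nat.find_min' hexQ (by
        rw [hfL]
        intro hg
        exact haBad (hmono _ _ _ _ hg (by rw [sub_self, bnorm_zero]; omega)))
      have hj0 : j ≠ 0 := by
        intro h
        rw [h, hf0] at hjspec
        exact hjspec hbGood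
      obtain ⟨j', hjj'⟩ : ∃ j', j = j' + 1 := ⟨j - 1, by omega⟩
      have hgj' : Good (n + k + 1) (f j') := by
        by_contra h
        exact Nat.find_min hexQ (by omega) h
      have hstepj : bnorm (f (j' + 1) - f j') ≤ 1 := hstep j' (by omega)
      have hGw : Good (n + k) (f (j' + 1)) := hmono _ _ _ _ hgj' (by omega)
      obtain ⟨z, hzO, hz⟩ := hGw
      have hnotG : ¬ Good (n + k + 1) (f (j' + 1)) := by rw [← hjj']; exact hjspec
      have hq : ∃ q, bnorm (q - f (j' + 1)) ≤ n + k + 1 ∧ c q ≠ z q := by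
        by_contra h
        push_neg at h
        exact hnotG ⟨z, hzO, h⟩
      obtain ⟨q, hq1, hq2⟩ := hq
      have hq3 : n + k < bnorm (q - f (j' + 1)) := by
        by_contra h
        push_neg at h
        exact hq2 (hz q h)
      refine ⟨f (j' + 1), q, z, hzO, hz, by omega, hq2, ?_⟩
      have hfN : N ≤ bnorm (f (j' + 1)) := hmem _ (by omega)
      have htri : bnorm (f (j' + 1)) ≤ bnorm (f (j' + 1) - q) + bnorm q := by
        have := bnorm_add_le (f (j' + 1) - q) q
        rwa [sub_add_cancel] at this
      have hsym : bnorm (f (j' + 1) - q) = bnorm (q - f (j' + 1)) := by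
        rw [← bnorm_neg (f (j' + 1) - q), neg_sub]
      omega
    choose wf qf zf hzfO hzf hqw hcq hqn using hk
    -- Step 2: cluster point of the recentered sequence
    have hZcomp : IsCompact Z := isClosed_closure.isCompact
    have hOcomp : IsCompact O := hOfin.isCompact
    set seq : ℕ → Config A × Config A := fun k => (shift (qf k) c, shift (qf k) (zf k))
      with hseqDef
    have hle : Filter.map seq atTop ≤ Filter.principal (Z ×ˢ O) := by
      rw [Filter.le_principal_iff, Filter.mem_map]
      apply Filter.Eventually.of_forall
      intro k
      exact ⟨subset_closure (shift_mem_orbit _ _), shift_mem_closure_orbit (hzfO k) _⟩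
    obtain ⟨⟨x, z'⟩, hmemprod, hclus⟩ := (hZcomp.prod hOcomp).exists_clusterPt hle
    have hxZ : x ∈ Z := hmemprod.1
    have hz'O : z' ∈ O := hmemprod.2
    have hfreq : ∀ (G : Finset (ℤ × ℤ)) (k₀ : ℕ), ∃ k, k₀ ≤ k ∧
        agreeOn (shift (qf k) c) x G ∧ shift (qf k) (zf k) = z' := by
      intro G k₀
      set B : Finset (ℤ × ℤ) := Finset.Icc (0, 0) (n - 1, n - 1) with hB
      have hU : ({ξ : Config A | agreeOn ξ x G} ×ˢ {ξ : Config A | agreeOn ξ z' B})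
          ∈ nhds (x, z') := by
        apply IsOpen.mem_nhds ((isOpen_agree x G).prod (isOpen_agree z' B))
        exact ⟨fun u _ => rfl, fun u _ => rfl⟩
      have hV : seq '' {k | k₀ ≤ k} ∈ Filter.map seq atTop := by
        rw [Filter.mem_map]
        exact Filter.mem_of_superset (Filter.mem_atTop k₀) (fun κ hκ => ⟨κ, hκ, rfl⟩)
      obtain ⟨ξ, hξU, hξV⟩ := clusterPt_iff_nonempty.mp hclus hU hV
      obtain ⟨k, hkk, rfl⟩ := hξV
      refine ⟨k, hkk, hξU.1, ?_⟩
      have hag : agreeOn (shift (qf k) (zf k)) z' B := hξU.2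
      by_contra hne
      have hmem2 : shift (qf k) (zf k) ∈ O := shift_mem_closure_orbit (hzfO k) _
      obtain ⟨t, ht1, ht2, ht3, ht4, htne⟩ := box_sep hn (hper _ hmem2).1 (hper _ hmem2).2
        (hper _ hz'O).1 (hper _ hz'O).2 hne (0, 0)
      dsimp only at ht1 ht2 ht3 ht4
      refine htne (hag t ?_)
      rw [hB, Finset.mem_Icc]
      exact ⟨⟨by omega, by omega⟩, ⟨by omega, by omega⟩⟩
    -- x differs from z' at the origin
    have hx0 : x 0 ≠ z' 0 := by
      obtain ⟨k, _, hag, hzeq⟩ := hfreq {0} 0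
      have h1 : shift (qf k) c 0 = x 0 := hag 0 (Finset.mem_singleton_self 0)
      have h2 : shift (qf k) (zf k) 0 = z' 0 := by rw [hzeq]
      rw [← h1, ← h2]
      simp only [shift_apply, zero_add]
      exact hcq k
    -- x matches z' on arbitrarily large balls
    have hbox : ∀ s : ℤ, n ≤ s → ∃ v : ℤ × ℤ, ∀ t, bnorm (t - v) ≤ s → x t = z' t := by
      intro s hs
      obtain ⟨k, hkk, hag, hzeq⟩ := hfreq (ballF (3 * s + 2)) s.toNat
      have hks : s ≤ (k : ℤ) := le_trans (Int.self_le_toNat s) (by exact_mod_cast hkk)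
      have hs0 : (0:ℤ) ≤ s := by omega
      have hsK : s ≤ n + k := by omega
      obtain ⟨m, hm1, hm2⟩ := midpoint_pt (wf k) (qf k) (n + k) s hs0 hsK (le_of_eq (hqw k))
      refine ⟨m - qf k, fun t ht => ?_⟩
      have htb : bnorm t ≤ 3 * s + 2 := by
        have h1 := bnorm_add_le (t - (m - qf k)) (m - qf k)
        rw [sub_add_cancel] at h1
        omega
      have e1 : x t = shift (qf k) c t := (hag t (mem_ballF.mpr htb)).symm
      have e2 : c (t + qf k) = zf k (t + qf k) := by
        apply hzf k
        have ha : t + qf k - wf k = (t - (m - qf k)) + (m - wf k) := by ring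
        have hb := bnorm_add_le (t - (m - qf k)) (m - wf k)
        rw [← ha] at hb
        omega
      have e3 : zf k (t + qf k) = z' t := by
        rw [← hzeq, shift_apply]
      rw [e1, shift_apply, e2, e3]
    -- x is not in the orbit of c
    have hxo : x ∉ orbit c := by
      rintro ⟨v, rfl⟩
      have happ : AppearsAt D p (shift v c) (u₀ - v) := by
        intro d hd
        rw [shift_apply]
        have e : u₀ - v + d + v = u₀ + d := by ring
        rw [e]
        exact hocc d hd
      obtain ⟨k, hkk, hag, _⟩ := hfreq (D.image (fun d => u₀ - v + d)) ((bnorm v).toNat + 1)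
      have happ2 : AppearsAt D p c (u₀ - v + qf k) := by
        intro d hd
        have h1 := hag _ (Finset.mem_image_of_mem _ hd)
        have e : u₀ - v + qf k + d = u₀ - v + d + qf k := by ring
        calc c (u₀ - v + qf k + d) = shift (qf k) c (u₀ - v + d) := by rw [shift_apply, e]
          _ = shift v c (u₀ - v + d) := h1
          _ = p d := happ d hd
      have hequ := huniq _ happ2
      have hqv : qf k = v := by
        have h1 : (u₀ - v + qf k).1 = u₀.1 := congrArg Prod.fst hequ
        have h2 : (u₀ - v + qf k).2 = u₀.2 := congrArg Prod.snd hequ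
        simp only [Prod.fst_add, Prod.fst_sub, Prod.snd_add, Prod.snd_sub] at h1 h2
        have : (qf k).1 = v.1 := by omega
        have : (qf k).2 = v.2 := by omega
        exact Prod.ext ‹(qf k).1 = v.1› ‹(qf k).2 = v.2›
      have hbig := hqn k
      rw [hqv] at hbig
      have hsmall := Int.self_le_toNat (bnorm v)
      have hcast : ((bnorm v).toNat + 1 : ℤ) ≤ (k : ℤ) := by exact_mod_cast hkk
      omega
    -- minimality of x
    have hx0lev : Level0 X x := hlev0 x hxZ hxo
    -- y ⪯ x
    have hyx : Preceq y x := by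
      have hv : ∀ s : ℕ, ∃ v : ℤ × ℤ, ∀ t, bnorm (t - v) ≤ n + s → x t = z' t :=
        fun s => hbox (n + s) (by omega)
      choose vs hvs using hv
      haveI := hOfin.to_subtype
      obtain ⟨z'', hz''⟩ := Finite.exists_infinite_fiber
        (fun s : ℕ => (⟨shift (vs s) z', shift_mem_closure_orbit hz'O _⟩ : O))
      have hinf : ((fun s : ℕ => (⟨shift (vs s) z', shift_mem_closure_orbit hz'O _⟩ : O))
          ⁻¹' {z''}).Infinite := Set.infinite_coe_iff.mp hz''
      have hz''cl : (z'' : Config A) ∈ closure (orbit x) := by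
        rw [mem_closure_iff_agree]
        intro F
        obtain ⟨s₀, hs₀, hF⟩ := finset_subset_ballF F
        obtain ⟨s, hsfib, hslt⟩ := hinf.exists_gt s₀.toNat
        refine ⟨shift (vs s) x, shift_mem_orbit _ _, ?_⟩
        intro u hu
        have hbu : bnorm u ≤ s₀ := mem_ballF.mp (hF u hu)
        have hb : bnorm (u + vs s - vs s) ≤ n + s := by
          rw [add_sub_cancel_right]
          have h1 := Int.self_le_toNat s₀
          have h2 : (s₀.toNat : ℤ) < (s : ℤ) := by exact_mod_cast hslt
          omega
        have e1 : x (u + vs s) = z' (u + vs s) := hvs s _ hb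
        have e2 : shift (vs s) z' = (z'' : Config A) := congrArg Subtype.val hsfib
        calc shift (vs s) x u = x (u + vs s) := rfl
          _ = z' (u + vs s) := e1
          _ = shift (vs s) z' u := rfl
          _ = (z'' : Config A) u := by rw [e2]
      have hz''O : (z'' : Config A) ∈ closure (orbit y) := z''.2
      rw [hOorb] at hz''O
      obtain ⟨u, hu⟩ := hz''O
      show y ∈ closure (orbit x)
      have hyeq : y = shift (-u) (z'' : Config A) := by
        rw [← hu, shift_shift, neg_add_cancel, shift_zero]
      rw [hyeq]
      exact shift_mem_closure_orbit hz''cl (-u)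
    have hxy : Preceq x y := hx0lev.2 y (hZX (hOZ hyO)) hyx
    have hxO : x ∈ O := hxy
    -- final contradiction
    obtain ⟨v, hv⟩ := hbox n le_rfl
    have hne : x ≠ z' := fun h => hx0 (by rw [h])
    obtain ⟨t, ht1, ht2, ht3, ht4, htne⟩ := box_sep hn (hper x hxO).1 (hper x hxO).2
      (hper z' hz'O).1 (hper z' hz'O).2 hne (v.1 - n, v.2 - n)
    dsimp only at ht1 ht2 ht3 ht4
    refine htne (hv t ?_)
    simp only [bnorm, Prod.fst_sub, Prod.snd_sub, sup_le_iff]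
    constructor <;> rw [abs_le] <;> omega


end CountableSubshift
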